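/- Let R_1,…,R_n be independent random variables and let Y_t = g_t(R_t) for measurable functions g_t with each Y_t integrable, t = 1,…,n. Then the optimal values over the two filtrations coincide: sup over stopping times τ of the filtration ℛ_t = σ(R_1,…,R_t) of E[Y_τ] equals sup over stopping times τ of the (smaller) filtration 𝒴_t = σ(Y_1,…,Y_t) of E[Y_τ]. -/

import Mathlib

open MeasureTheory ProbabilityTheory Finset
open scoped ENNReal Classical

noncomputable section

/-- The σ-algebra on `Ω` generated by the functions `f 1, …, f t`. -/
def genFilt {Ω β : Type*} [MeasurableSpace β] (f : ℕ → Ω → β) (t : ℕ) :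
    MeasurableSpace Ω :=
  ⨆ i ∈ Set.Icc 1 t, MeasurableSpace.comap (f i) inferInstance

/-- `τ` is a stopping time with values in `{1,…,n}` of the filtration generated by `f`. -/
def IsStopTime {Ω β : Type*} [MeasurableSpace β] (f : ℕ → Ω → β) (n : ℕ) (τ : Ω → ℕ) : Prop :=
  (∀ ω, τ ω ∈ Set.Icc 1 n) ∧ ∀ t, MeasurableSet[genFilt f t] {ω | τ ω = t}

/-- The family `(f i)_{i ∈ s}` is independent under `μ`. -/
def IndepSeq {Ω β : Type*} [MeasurableSpace Ω] [MeasurableSpace β]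
    (f : ℕ → Ω → β) (s : Set ℕ) (μ : Measure Ω) : Prop :=
  iIndepFun (β := fun _ : s => β) (m := fun _ : s => (inferInstance : MeasurableSpace β)) (fun i : s => f i.1) μ

/-- `N` is independent of the family `(f i)_{i ∈ s}`. -/
def IndepOfSeq {Ω β : Type*} [MeasurableSpace Ω] [MeasurableSpace β]
    (N : Ω → ℕ) (f : ℕ → Ω → β) (s : Set ℕ) (μ : Measure Ω) : Prop :=
  IndepFun N (fun ω (i : s) => f i.1 ω) μ

/-- The absolute rank `A_{t,k}` of `X t` among `X 1, …, X k`
(the largest observation has rank 1). -/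
def absRank {Ω : Type*} (X : ℕ → Ω → ℝ) (t k : ℕ) (ω : Ω) : ℕ :=
  ((Finset.Icc 1 k).filter fun j => X t ω ≤ X j ω).card

/-- The relative rank `R_t = A_{t,t}`. -/
def relRank {Ω : Type*} (X : ℕ → Ω → ℝ) (t : ℕ) (ω : Ω) : ℕ := absRank X t t ω

/-- `(X i)_{i ∈ s}` are i.i.d. with an atomless (continuous) common distribution. -/
def IIDContinuousOn {Ω : Type*} [MeasurableSpace Ω] (X : ℕ → Ω → ℝ) (s : Set ℕ)
    (μ : Measure Ω) : Prop :=
  (∀ i ∈ s, Measurable (X i)) ∧ IndepSeq X s μ ∧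
  (∀ i ∈ s, ∀ j ∈ s, IdentDistrib (X i) (X j) μ μ) ∧
  (∀ i ∈ s, ∀ x : ℝ, μ {ω | X i ω = x} = 0)

/-! Since the `R_t` are independent and `Y_t` depends on `R_t` only, the optimal stopping
problem for `Y` over the filtration of the `R`'s has deterministic continuation values:
`v_n = E[Y_n]` and `v_t = E[max (Y_t, v_{t+1})]`. For any stopping time `τ` of that filtration,
`E[Y_τ] - v_1` telescopes into a sum of losses, one per time `t < n`, each of which is
nonpositive because `{t ≤ τ}` is determined by `R_1, …, R_{t-1}` and hence independent of `Y_t`.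
The greedy rule "stop at the first `t` with `Y_t ≥ v_{t+1}`" incurs no loss, and it only looks
at the `Y`'s; so `v_1` is the optimal value over both filtrations. -/

section Filtration

variable {Ω β γ : Type*} [MeasurableSpace β] [MeasurableSpace γ] {f : ℕ → Ω → β} {n : ℕ}
  {τ : Ω → ℕ}

lemma comap_le_genFilt {i t : ℕ} (hi : 1 ≤ i) (hit : i ≤ t) :
    MeasurableSpace.comap (f i) inferInstance ≤ genFilt f t :=
  le_iSup₂ (f := fun i (_ : i ∈ Set.Icc 1 t) => MeasurableSpace.comap (f i) inferInstance) i
    ⟨hi, hit⟩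

lemma genFilt_mono {s t : ℕ} (h : s ≤ t) : genFilt f s ≤ genFilt f t :=
  iSup₂_le fun _ hi => comap_le_genFilt hi.1 (hi.2.trans h)

lemma genFilt_le [MeasurableSpace Ω] (hf : ∀ i, Measurable (f i)) (t : ℕ) :
    genFilt f t ≤ ‹MeasurableSpace Ω› :=
  iSup₂_le fun i _ => (hf i).comap_le

lemma genFilt_le_of_comp {g : ℕ → β → γ} {h : ℕ → Ω → γ} (hg : ∀ t, Measurable (g t))
    (hh : ∀ t ω, h t ω = g t (f t ω)) (t : ℕ) : genFilt h t ≤ genFilt f t := by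
  refine iSup₂_le fun i hi => ?_
  have hi_meas : Measurable[MeasurableSpace.comap (f i) inferInstance] (h i) := by
    rw [show h i = g i ∘ f i from funext (hh i)]
    exact (hg i).comp (comap_measurable (f i))
  exact hi_meas.comap_le.trans (comap_le_genFilt hi.1 hi.2)

lemma IsStopTime.mono {h : ℕ → Ω → γ} (hτ : IsStopTime h n τ)
    (hle : ∀ t, genFilt h t ≤ genFilt f t) : IsStopTime f n τ :=
  ⟨hτ.1, fun t => hle t _ (hτ.2 t)⟩

lemma IsStopTime.measurableSet_ge_pred (hτ : IsStopTime f n τ) (t : ℕ) :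
    MeasurableSet[genFilt f (t - 1)] {ω | t ≤ τ ω} := by
  have h : {ω | t ≤ τ ω} = (⋃ s ∈ Finset.range t, {ω | τ ω = s})ᶜ := by
    ext ω
    simp only [Set.mem_ofPred_eq, Set.mem_compl_iff, Set.mem_iUnion, Finset.mem_range, not_exists]
    exact ⟨fun h i hi he => by omega, fun h => not_lt.mp fun hlt => h _ hlt rfl⟩
  rw [h]
  refine (MeasurableSet.biUnion (Finset.range t).countable_toSet fun s hs => ?_).compl
  exact genFilt_mono (by simp at hs; omega) _ (hτ.2 s)

lemma isStopTime_hittingBtwn {u : ℕ → Ω → γ} {s : Set γ} (hn : 1 ≤ n)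
    (hu : ∀ t, 1 ≤ t → Measurable[genFilt f t] (u t)) (hs : MeasurableSet s) :
    IsStopTime f n (hittingBtwn u s 1 n) := by
  have hle : ∀ t, MeasurableSet[genFilt f t] {ω | hittingBtwn u s 1 n ω ≤ t} := by
    intro t
    rcases lt_or_ge t n with ht | ht
    · have h : {ω | hittingBtwn u s 1 n ω ≤ t} = ⋃ j ∈ Set.Icc 1 t, u j ⁻¹' s := by
        ext; simp [hittingBtwn_le_iff_of_lt t ht]
      rw [h]
      exact MeasurableSet.biUnion (Set.to_countable _) fun j hj =>
        genFilt_mono hj.2 _ (hu j hj.1 hs)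
    · simp [(hittingBtwn_le _).trans ht]
  refine ⟨hittingBtwn_mem_Icc hn, fun t => ?_⟩
  have h : {ω | hittingBtwn u s 1 n ω = t}
      = {ω | hittingBtwn u s 1 n ω ≤ t} \ {ω | hittingBtwn u s 1 n ω ≤ t - 1} := by
    ext ω
    have := le_hittingBtwn (u := u) (s := s) hn ω
    simp only [Set.mem_ofPred_eq, Set.mem_sdiff]
    omega
  rw [h]
  exact (hle t).diff (genFilt_mono (Nat.sub_le t 1) _ (hle (t - 1)))

lemma IsStopTime.integrable_stopped [MeasurableSpace Ω] {μ : Measure Ω} {Y : ℕ → Ω → ℝ}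
    (hτ : IsStopTime f n τ) (hf : ∀ i, Measurable (f i))
    (hY : ∀ t ∈ Set.Icc 1 n, Integrable (Y t) μ) :
    Integrable (fun ω => Y (τ ω) ω) μ := by
  have h : (fun ω => Y (τ ω) ω)
      = fun ω => ∑ t ∈ Finset.Icc 1 n, {ω | τ ω = t}.indicator (Y t) ω := by
    funext ω
    rw [Finset.sum_eq_single_of_mem (τ ω) (Finset.mem_Icc.mpr (hτ.1 ω))]
    · simp
    · intro t _ ht
      exact Set.indicator_of_notMem (s := {ω | τ ω = t}) (Ne.symm ht) (Y t)
  rw [h]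
  exact integrable_finsetSum _ fun t ht =>
    (hY t (Finset.mem_Icc.mp ht)).indicator (genFilt_le hf t _ (hτ.2 t))

lemma IsStopTime.setIntegral_ge_eq_add [MeasurableSpace Ω] {μ : Measure Ω} {F : Ω → ℝ}
    (hτ : IsStopTime f n τ) (hf : ∀ i, Measurable (f i)) (hF : Integrable F μ) (t : ℕ) :
    ∫ ω in {ω | t ≤ τ ω}, F ω ∂μ
      = ∫ ω in {ω | τ ω = t}, F ω ∂μ + ∫ ω in {ω | t < τ ω}, F ω ∂μ := by
  have hsplit : {ω | t ≤ τ ω} = {ω | τ ω = t} ∪ {ω | t < τ ω} := by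
    ext ω; simp only [Set.mem_ofPred_eq, Set.mem_union]; omega
  have hdisj : Disjoint {ω | τ ω = t} {ω | t < τ ω} :=
    Set.disjoint_left.2 fun ω (h1 : τ ω = t) (h2 : t < τ ω) => by omega
  rw [hsplit, setIntegral_union hdisj (genFilt_le hf t _ (hτ.measurableSet_ge_pred (t + 1)))
    hF.integrableOn hF.integrableOn]

lemma IndepSeq.indep_genFilt_pred [MeasurableSpace Ω] {μ : Measure Ω}
    (hindep : IndepSeq f (Set.Icc 1 n) μ) (hf : ∀ i, Measurable (f i)) {t : ℕ}
    (ht : t ∈ Set.Icc 1 n) :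
    Indep (genFilt f (t - 1)) (MeasurableSpace.comap (f t) inferInstance) μ := by
  let m : Set.Icc 1 n → MeasurableSpace Ω := fun i => MeasurableSpace.comap (f i) inferInstance
  have hm : iIndep m μ := (iIndepFun_iff_iIndep _ _ _).mp hindep
  have h := indep_iSup_of_disjoint (m := m) (fun i => (hf i.1).comap_le) hm
    (S := {i | i.1 < t}) (T := {i | i.1 = t})
    (Set.disjoint_left.2 fun _ h1 h2 => (Nat.ne_of_lt h1) h2)
  refine indep_of_indep_of_le_right (indep_of_indep_of_le_left h ?_) ?_
  · refine iSup₂_le fun i hi => ?_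
    exact le_iSup₂ (f := fun i (_ : i ∈ {i : Set.Icc 1 n | i.1 < t}) => m i)
      ⟨i, hi.1, by grind⟩ (by grind)
  · exact le_iSup₂ (f := fun i (_ : i ∈ {i : Set.Icc 1 n | i.1 = t}) => m i) ⟨t, ht⟩ rfl

end Filtration

section OptimalStopping

variable {Ω β : Type*} [MeasurableSpace Ω] [MeasurableSpace β]

def optimalValue (μ : Measure Ω) (Y : ℕ → Ω → ℝ) (n t : ℕ) : ℝ :=
  if t < n then ∫ ω, max (Y t ω) (optimalValue μ Y n (t + 1)) ∂μ else ∫ ω, Y t ω ∂μ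
termination_by n - t

def greedyTime (μ : Measure Ω) (Y : ℕ → Ω → ℝ) (n : ℕ) : Ω → ℕ :=
  hittingBtwn (fun t ω => Y t ω - optimalValue μ Y n (t + 1)) (Set.Ici 0) 1 n

variable {μ : Measure Ω} {Y : ℕ → Ω → ℝ} {n t : ℕ} {τ : Ω → ℕ}

lemma optimalValue_of_lt (h : t < n) :
    optimalValue μ Y n t = ∫ ω, max (Y t ω) (optimalValue μ Y n (t + 1)) ∂μ := by
  rw [optimalValue, if_pos h]

lemma optimalValue_self : optimalValue μ Y n n = ∫ ω, Y n ω ∂μ := by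
  rw [optimalValue, if_neg (lt_irrefl n)]

lemma optimalValue_le_of_greedyTime_lt {ω : Ω} (h : greedyTime μ Y n ω < n) :
    optimalValue μ Y n (greedyTime μ Y n ω + 1) ≤ Y (greedyTime μ Y n ω) ω :=
  sub_nonneg.mp (hittingBtwn_mem_set_of_hittingBtwn_lt h)

lemma lt_optimalValue_of_lt_greedyTime {ω : Ω} (ht : 1 ≤ t) (h : t < greedyTime μ Y n ω) :
    Y t ω < optimalValue μ Y n (t + 1) :=
  sub_neg.mp (not_le.mp (notMem_of_lt_hittingBtwn
    (u := fun t ω => Y t ω - optimalValue μ Y n (t + 1)) (s := Set.Ici 0) h ht))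

lemma isStopTime_greedyTime (hn : 1 ≤ n) : IsStopTime Y n (greedyTime μ Y n) :=
  isStopTime_hittingBtwn hn (fun t ht =>
    ((comap_measurable (Y t)).mono (comap_le_genFilt ht le_rfl) le_rfl).sub_const _)
    measurableSet_Ici

def valueGap (μ : Measure Ω) (Y : ℕ → Ω → ℝ) (n : ℕ) (τ : Ω → ℕ) (t : ℕ) : ℝ :=
  ∫ ω in {ω | t ≤ τ ω}, Y (τ ω) ω ∂μ - μ.real {ω | t ≤ τ ω} * optimalValue μ Y n t

def stepLoss (μ : Measure Ω) (Y : ℕ → Ω → ℝ) (n : ℕ) (τ : Ω → ℕ) (t : ℕ) : ℝ :=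
  (∫ ω in {ω | τ ω = t}, (Y t ω - max (Y t ω) (optimalValue μ Y n (t + 1))) ∂μ)
    + ∫ ω in {ω | t < τ ω},
        (optimalValue μ Y n (t + 1) - max (Y t ω) (optimalValue μ Y n (t + 1))) ∂μ

lemma stepLoss_nonpos : stepLoss μ Y n τ t ≤ 0 :=
  add_nonpos (integral_nonpos fun _ => sub_nonpos.2 (le_max_left _ _))
    (integral_nonpos fun _ => sub_nonpos.2 (le_max_right _ _))

lemma stepLoss_greedyTime (ht : t ∈ Set.Ico 1 n) : stepLoss μ Y n (greedyTime μ Y n) t = 0 := by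
  have hstop : ∀ ω ∈ {ω | greedyTime μ Y n ω = t},
      Y t ω - max (Y t ω) (optimalValue μ Y n (t + 1)) = 0 := by
    rintro ω (hω : _ = t)
    have := optimalValue_le_of_greedyTime_lt (hω ▸ ht.2 : greedyTime μ Y n ω < n)
    rw [hω] at this
    rw [max_eq_left this, sub_self]
  have hcont : ∀ ω ∈ {ω | t < greedyTime μ Y n ω},
      optimalValue μ Y n (t + 1) - max (Y t ω) (optimalValue μ Y n (t + 1)) = 0 := fun ω hω => by
    rw [max_eq_right (lt_optimalValue_of_lt_greedyTime ht.1 hω).le, sub_self]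
  rw [stepLoss, setIntegral_eq_zero_of_forall_eq_zero hstop,
    setIntegral_eq_zero_of_forall_eq_zero hcont, add_zero]

variable {R : ℕ → Ω → β} {g : ℕ → β → ℝ}

lemma setIntegral_comp_eq_measureReal_mul (hRmeas : ∀ i, Measurable (R i))
    (hRindep : IndepSeq R (Set.Icc 1 n) μ) (ht : t ∈ Set.Icc 1 n) {φ : β → ℝ}
    (hφ : Measurable φ) {A : Set Ω} (hA : MeasurableSet[genFilt R (t - 1)] A) :
    ∫ ω in A, φ (R t ω) ∂μ = μ.real A * ∫ ω, φ (R t ω) ∂μ :=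
  (hRindep.indep_genFilt_pred hRmeas ht).setIntegral_eq_mul (genFilt_le hRmeas _)
    (hRmeas t).aemeasurable hA hφ.aestronglyMeasurable

lemma valueGap_self (hRmeas : ∀ i, Measurable (R i)) (hRindep : IndepSeq R (Set.Icc 1 n) μ)
    (hg : ∀ t, Measurable (g t)) (hY : ∀ t ω, Y t ω = g t (R t ω)) (hn : 1 ≤ n)
    (hτ : IsStopTime R n τ) : valueGap μ Y n τ n = 0 := by
  have hA := hτ.measurableSet_ge_pred n
  have hstopped : ∫ ω in {ω | n ≤ τ ω}, Y (τ ω) ω ∂μ = ∫ ω in {ω | n ≤ τ ω}, Y n ω ∂μ :=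
    setIntegral_congr_fun (genFilt_le hRmeas _ _ hA) fun ω (hω : n ≤ τ ω) => by
      rw [le_antisymm (hτ.1 ω).2 hω]
  rw [valueGap, hstopped, optimalValue_self]
  simp only [hY]
  rw [setIntegral_comp_eq_measureReal_mul hRmeas hRindep ⟨hn, le_rfl⟩ (hg n) hA, sub_self]

lemma valueGap_eq_stepLoss_add [IsProbabilityMeasure μ] (hRmeas : ∀ i, Measurable (R i))
    (hRindep : IndepSeq R (Set.Icc 1 n) μ) (hg : ∀ t, Measurable (g t))
    (hY : ∀ t ω, Y t ω = g t (R t ω)) (hYint : ∀ t ∈ Set.Icc 1 n, Integrable (Y t) μ)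
    (hτ : IsStopTime R n τ) (ht : t ∈ Set.Ico 1 n) :
    valueGap μ Y n τ t = stepLoss μ Y n τ t + valueGap μ Y n τ (t + 1) := by
  set v := optimalValue μ Y n (t + 1)
  have hYt : Integrable (Y t) μ := hYint t ⟨ht.1, ht.2.le⟩
  have hM : Integrable (fun ω => max (Y t ω) v) μ := hYt.sup (integrable_const v)
  have hYτ : Integrable (fun ω => Y (τ ω) ω) μ := hτ.integrable_stopped hRmeas hYint
  have hstopped : ∫ ω in {ω | t ≤ τ ω}, Y (τ ω) ω ∂μ
      = ∫ ω in {ω | τ ω = t}, Y t ω ∂μ + ∫ ω in {ω | t < τ ω}, Y (τ ω) ω ∂μ := by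
    rw [hτ.setIntegral_ge_eq_add hRmeas hYτ]
    congr 1
    exact setIntegral_congr_fun (genFilt_le hRmeas t _ (hτ.2 t)) fun ω (hω : τ ω = t) => by
      rw [hω]
  have hvalue : μ.real {ω | t ≤ τ ω} * optimalValue μ Y n t
      = ∫ ω in {ω | τ ω = t}, max (Y t ω) v ∂μ + ∫ ω in {ω | t < τ ω}, max (Y t ω) v ∂μ := by
    rw [← hτ.setIntegral_ge_eq_add hRmeas hM, optimalValue_of_lt ht.2]
    simp only [hY]
    exact (setIntegral_comp_eq_measureReal_mul hRmeas hRindep ⟨ht.1, ht.2.le⟩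
      ((hg t).max measurable_const) (hτ.measurableSet_ge_pred t)).symm
  have hcont : μ.real {ω | t < τ ω} * v = ∫ ω in {ω | t < τ ω}, v ∂μ := by
    rw [setIntegral_const, smul_eq_mul]
  have hloss : stepLoss μ Y n τ t
      = (∫ ω in {ω | τ ω = t}, Y t ω ∂μ - ∫ ω in {ω | τ ω = t}, max (Y t ω) v ∂μ)
        + (∫ ω in {ω | t < τ ω}, v ∂μ - ∫ ω in {ω | t < τ ω}, max (Y t ω) v ∂μ) := by
    rw [stepLoss, integral_sub hYt.integrableOn hM.integrableOn,
      integral_sub (integrable_const v).integrableOn hM.integrableOn]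
  have hnext : valueGap μ Y n τ (t + 1)
      = ∫ ω in {ω | t < τ ω}, Y (τ ω) ω ∂μ - μ.real {ω | t < τ ω} * v := rfl
  rw [valueGap, hnext, hloss, hstopped, hvalue, hcont]
  ring

lemma integral_stopped_sub_optimalValue [IsProbabilityMeasure μ]
    (hRmeas : ∀ i, Measurable (R i)) (hRindep : IndepSeq R (Set.Icc 1 n) μ)
    (hg : ∀ t, Measurable (g t)) (hY : ∀ t ω, Y t ω = g t (R t ω))
    (hYint : ∀ t ∈ Set.Icc 1 n, Integrable (Y t) μ) (hn : 1 ≤ n) (hτ : IsStopTime R n τ) :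
    ∫ ω, Y (τ ω) ω ∂μ - optimalValue μ Y n 1 = ∑ t ∈ Finset.Ico 1 n, stepLoss μ Y n τ t := by
  have hfirst : valueGap μ Y n τ 1 = ∫ ω, Y (τ ω) ω ∂μ - optimalValue μ Y n 1 := by
    have huniv : {ω | 1 ≤ τ ω} = Set.univ := Set.eq_univ_of_forall fun ω => (hτ.1 ω).1
    rw [valueGap, huniv, setIntegral_univ, probReal_univ, one_mul]
  calc ∫ ω, Y (τ ω) ω ∂μ - optimalValue μ Y n 1
      = valueGap μ Y n τ 1 - valueGap μ Y n τ n := by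
        rw [hfirst, valueGap_self hRmeas hRindep hg hY hn hτ, sub_zero]
    _ = ∑ t ∈ Finset.Ico 1 n, stepLoss μ Y n τ t := by
        rw [← neg_sub, ← Finset.sum_Ico_sub (f := valueGap μ Y n τ) hn,
          ← Finset.sum_neg_distrib]
        refine Finset.sum_congr rfl fun t ht => ?_
        rw [valueGap_eq_stepLoss_add hRmeas hRindep hg hY hYint hτ (Finset.mem_Ico.mp ht)]
        ring

lemma integral_stopped_le_optimalValue [IsProbabilityMeasure μ]
    (hRmeas : ∀ i, Measurable (R i)) (hRindep : IndepSeq R (Set.Icc 1 n) μ)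
    (hg : ∀ t, Measurable (g t)) (hY : ∀ t ω, Y t ω = g t (R t ω))
    (hYint : ∀ t ∈ Set.Icc 1 n, Integrable (Y t) μ) (hn : 1 ≤ n) (hτ : IsStopTime R n τ) :
    ∫ ω, Y (τ ω) ω ∂μ ≤ optimalValue μ Y n 1 := by
  have h := integral_stopped_sub_optimalValue hRmeas hRindep hg hY hYint hn hτ
  have hloss : ∑ t ∈ Finset.Ico 1 n, stepLoss μ Y n τ t ≤ 0 :=
    Finset.sum_nonpos fun _ _ => stepLoss_nonpos
  linarith

lemma integral_greedyTime_eq_optimalValue [IsProbabilityMeasure μ]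
    (hRmeas : ∀ i, Measurable (R i)) (hRindep : IndepSeq R (Set.Icc 1 n) μ)
    (hg : ∀ t, Measurable (g t)) (hY : ∀ t ω, Y t ω = g t (R t ω))
    (hYint : ∀ t ∈ Set.Icc 1 n, Integrable (Y t) μ) (hn : 1 ≤ n) :
    ∫ ω, Y (greedyTime μ Y n ω) ω ∂μ = optimalValue μ Y n 1 := by
  have h := integral_stopped_sub_optimalValue hRmeas hRindep hg hY hYint hn
    ((isStopTime_greedyTime (μ := μ) hn).mono (genFilt_le_of_comp hg hY))
  rw [Finset.sum_eq_zero fun t ht => stepLoss_greedyTime (Finset.mem_Ico.mp ht)] at h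
  linarith

end OptimalStopping

/-- if `R_1,…,R_n` are independent and `Y t = g t (R t)`, then the optimal
stopping values over the filtration generated by the `R`'s and over the (smaller)
filtration generated by the `Y`'s coincide. -/
theorem stmt_4 {Ω : Type*} [MeasurableSpace Ω] (μ : Measure Ω) [IsProbabilityMeasure μ]
    (n : ℕ) (hn : 1 ≤ n)
    (R : ℕ → Ω → ℝ) (hRmeas : ∀ i, Measurable (R i))
    (hRindep : IndepSeq R (Set.Icc 1 n) μ)
    (g : ℕ → ℝ → ℝ) (hg : ∀ t, Measurable (g t))
    (Y : ℕ → Ω → ℝ) (hY : ∀ t ω, Y t ω = g t (R t ω))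
    (hYint : ∀ t ∈ Set.Icc 1 n, Integrable (Y t) μ) :
    sSup {x : ℝ | ∃ τ : Ω → ℕ, IsStopTime R n τ ∧ x = ∫ ω, Y (τ ω) ω ∂μ}
      = sSup {x : ℝ | ∃ τ : Ω → ℕ, IsStopTime Y n τ ∧ x = ∫ ω, Y (τ ω) ω ∂μ} := by
  have hle := genFilt_le_of_comp hg hY
  have hgreedy : IsStopTime Y n (greedyTime μ Y n) := isStopTime_greedyTime hn
  have hvalue := integral_greedyTime_eq_optimalValue hRmeas hRindep hg hY hYint hn
  have hR : IsGreatest {x : ℝ | ∃ τ : Ω → ℕ, IsStopTime R n τ ∧ x = ∫ ω, Y (τ ω) ω ∂μ}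
      (optimalValue μ Y n 1) := by
    refine ⟨⟨greedyTime μ Y n, hgreedy.mono hle, hvalue.symm⟩, ?_⟩
    rintro _ ⟨τ, hτ, rfl⟩
    exact integral_stopped_le_optimalValue hRmeas hRindep hg hY hYint hn hτ
  have hYgreatest : IsGreatest {x : ℝ | ∃ τ : Ω → ℕ, IsStopTime Y n τ ∧ x = ∫ ω, Y (τ ω) ω ∂μ}
      (optimalValue μ Y n 1) := by
    refine ⟨⟨greedyTime μ Y n, hgreedy, hvalue.symm⟩, ?_⟩
    rintro _ ⟨τ, hτ, rfl⟩
    exact hR.2 ⟨τ, hτ.mono hle, rfl⟩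
  rw [hR.csSup_eq, hYgreatest.csSup_eq]
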